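/- arXiv:2603.02400 — 2 statements merged into one kernel-verified Lean document; each statement's English description precedes it below -/
import Mathlib

section
/- Let T be a bidirected tree rooted at a vertex z, and let r and r' be two converging requests in T. Then r and r' interfere if and only if the penultimate vertices t_r^- and t_{r'}^- are related. -/
open SimpleGraph

/-- A request in a bidirected tree `T`: a directed path of length at least 1,
encoded as a path (walk without vertex repetition) in the underlying tree. -/
structure Request {V : Type*} (T : SimpleGraph V) where
  s : V
  t : V
  toWalk : T.Walk s t
  isPath : toWalk.IsPath
  one_le_length : 1 ≤ toWalk.length

namespace Request

variable {V : Type*} {T : SimpleGraph V}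

/-- The second vertex `s_r⁺` of a request. -/
def sPlus (r : Request T) : V := r.toWalk.getVert 1

/-- The penultimate vertex `t_r⁻` of a request. -/
def tMinus (r : Request T) : V := r.toWalk.getVert (r.toWalk.length - 1)

end Request

variable {V : Type*}

/-- `r` interferes on `r'` if the unique path from `s_r` to `t_{r'}` in the tree `T`
has first arc the emission arc of `r` and last arc the reception arc of `r'`. -/
def InterferesOn (T : SimpleGraph V) (r r' : Request T) : Prop :=
  ∃ p : T.Walk r.s r'.t, p.IsPath ∧ 1 ≤ p.length ∧
    p.getVert 1 = r.sPlus ∧ p.getVert (p.length - 1) = r'.tMinus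

/-- Two requests interfere if one of them interferes on the other. -/
def Interfere (T : SimpleGraph V) (r r' : Request T) : Prop :=
  InterferesOn T r r' ∨ InterferesOn T r' r

/-- `x` is an ancestor of `y` in the tree `T` rooted at `z`:
`x` lies on the unique path from `z` to `y`. -/
def Ancestor (T : SimpleGraph V) (z x y : V) : Prop :=
  ∃ p : T.Walk z y, p.IsPath ∧ x ∈ p.support

/-- Two vertices are related if one is an ancestor of the other. -/
def Related (T : SimpleGraph V) (z x y : V) : Prop :=
  Ancestor T z x y ∨ Ancestor T z y x

/-- A request is converging (w.r.t. root `z`) if all its arcs are directed towards `z`,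
i.e. the head of every arc is an ancestor of its tail. -/
def Converging (T : SimpleGraph V) (z : V) (r : Request T) : Prop :=
  ∀ i < r.toWalk.length, Ancestor T z (r.toWalk.getVert (i+1)) (r.toWalk.getVert i)

/-- A request is diverging (w.r.t. root `z`) if all its arcs are directed away from `z`,
i.e. the tail of every arc is an ancestor of its head. -/
def Diverging (T : SimpleGraph V) (z : V) (r : Request T) : Prop :=
  ∀ i < r.toWalk.length, Ancestor T z (r.toWalk.getVert i) (r.toWalk.getVert (i+1))

/-- A request is unimodal (w.r.t. root `z`) if it is neither converging nor diverging. -/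
def Unimodal (T : SimpleGraph V) (z : V) (r : Request T) : Prop :=
  ¬ Converging T z r ∧ ¬ Diverging T z r

/-- `m` is the middle of the request `r` (w.r.t. root `z`): the vertex of `r`
closest to the root, i.e. the vertex of `r` which is an ancestor of every vertex of `r`. -/
def IsMiddle (T : SimpleGraph V) (z : V) (r : Request T) (m : V) : Prop :=
  m ∈ r.toWalk.support ∧ ∀ y ∈ r.toWalk.support, Ancestor T z m y

/-- The interference graph of a family of requests: two (indices of) requests are
adjacent iff they are distinct and the requests interfere. -/
def interferenceGraph (T : SimpleGraph V) {ι : Type*} (f : ι → Request T) :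
    SimpleGraph ι where
  Adj i j := i ≠ j ∧ Interfere T (f i) (f j)
  symm := by
    constructor
    intro i j h
    exact ⟨h.1.symm, h.2.symm⟩
  loopless := by
    constructor
    intro i h
    exact h.1 rfl

/-- The interference graph of a set of requests. -/
def interGraph (T : SimpleGraph V) (R : Set (Request T)) : SimpleGraph ↥R :=
  interferenceGraph T (fun r => (r : Request T))

/-- The pair `(a, b)` is an arc joining two consecutive vertices of the
bidirected path corresponding to the walk `p` (in either direction). -/
def ArcOn (T : SimpleGraph V) {u v : V} (p : T.Walk u v) (a b : V) : Prop :=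
  ∃ j < p.length, (p.getVert j = a ∧ p.getVert (j+1) = b) ∨
    (p.getVert j = b ∧ p.getVert (j+1) = a)

/-- The request `r` shares an arc with the bidirected path corresponding to
the walk `p`. -/
def SharesArc (T : SimpleGraph V) {u v : V} (p : T.Walk u v) (r : Request T) : Prop :=
  ∃ i < r.toWalk.length, ArcOn T p (r.toWalk.getVert i) (r.toWalk.getVert (i+1))

/-- A leaf of a tree: a vertex with at most one neighbour. -/
def IsLeaf (T : SimpleGraph V) (y : V) : Prop :=
  {w | T.Adj y w}.Subsingleton

/-- A comparability graph: there is a partial order on the vertices such that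
two distinct vertices are adjacent iff they are comparable. -/
def IsComparabilityGraph {α : Type*} (G : SimpleGraph α) : Prop :=
  ∃ le : α → α → Prop, IsPartialOrder α le ∧ ∀ a b, G.Adj a b ↔ a ≠ b ∧ (le a b ∨ le b a)

/-- A cobipartite graph: the vertex set can be partitioned into two cliques. -/
def IsCobipartite {α : Type*} (G : SimpleGraph α) : Prop :=
  ∃ A : Set α, G.IsClique A ∧ G.IsClique Aᶜ

/-!
Along a converging request each vertex is an ancestor of the previous one, so `t_r⁻` is an
ancestor of `s_r`, and `t_r` is the parent of `t_r⁻`. If `r` interferes on `r'`, then `t_{r'}⁻`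
lies on the path from `s_r` to `t_{r'}` without being an ancestor of `t_{r'}`, so it is an
ancestor of `s_r`, like `t_r⁻`; two ancestors of one vertex are related. Conversely, if `t_{r'}⁻`
is an ancestor of `t_r⁻`, then `t_{r'}` is a proper ancestor of `s_r`, and the path from `s_r` up
to `t_{r'}` starts at the parent `s_r⁺` of `s_r` and reaches `t_{r'}` from its child `t_{r'}⁻`.
-/

section RootedTree

variable {T : SimpleGraph V} {z a b c u v w x y : V}

theorem isPath_eq_of_isAcyclic (hA : T.IsAcyclic) {p q : T.Walk u v} (hp : p.IsPath)
    (hq : q.IsPath) : p = q :=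
  congrArg Subtype.val ((hA.subsingleton_path u v).elim ⟨p, hp⟩ ⟨q, hq⟩)

theorem ancestor_self (hC : T.Connected) (z x : V) : Ancestor T z x x :=
  let ⟨p, hp⟩ := hC.exists_isPath z x
  ⟨p, hp, p.end_mem_support⟩

namespace Ancestor

theorem mem_support (hA : T.IsAcyclic) (h : Ancestor T z x y) {p : T.Walk z y}
    (hp : p.IsPath) : x ∈ p.support := by
  obtain ⟨q, hq, hx⟩ := h
  rwa [isPath_eq_of_isAcyclic hA hp hq]

theorem trans (hA : T.IsAcyclic) (hxy : Ancestor T z x y) (hyw : Ancestor T z y w) :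
    Ancestor T z x w := by
  classical
  obtain ⟨p, hp, hy⟩ := hyw
  exact ⟨p, hp, p.support_takeUntil_subset_support hy (hxy.mem_support hA (hp.takeUntil hy))⟩

theorem antisymm (hA : T.IsAcyclic) (hxy : Ancestor T z x y) (hyx : Ancestor T z y x) :
    x = y := by
  classical
  by_contra hne
  obtain ⟨p, hp, hx⟩ := hxy
  have hy := hyx.mem_support hA (hp.takeUntil hx)
  -- `p` would be a proper initial segment of itself
  have hshort := p.length_takeUntil_lt_length hx hne
  have hself : (p.takeUntil x hx).takeUntil y hy = p :=
    isPath_eq_of_isAcyclic hA ((hp.takeUntil hx).takeUntil hy) hp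
  have := (p.takeUntil x hx).length_takeUntil_le_length hy
  rw [hself] at this
  omega

theorem related_of_ancestor (hA : T.IsAcyclic) (hx : Ancestor T z x u)
    (hy : Ancestor T z y u) : Related T z x y := by
  classical
  obtain ⟨p, hp, hxp⟩ := hx
  have hyp := hy.mem_support hA hp
  rw [← p.take_spec hxp, Walk.mem_support_append_iff] at hyp
  rcases hyp with hy_before | hy_after
  · exact Or.inr ⟨p.takeUntil x hxp, hp.takeUntil hxp, hy_before⟩
  · let q := (p.takeUntil x hxp).append ((p.dropUntil x hxp).takeUntil y hy_after)
    have hpq : q.append ((p.dropUntil x hxp).dropUntil y hy_after) = p := by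
      rw [← Walk.append_assoc, Walk.take_spec, Walk.take_spec]
    refine Or.inl ⟨q, (hpq ▸ hp).of_append_left, ?_⟩
    exact (Walk.mem_support_append_iff _ _).2 (Or.inl (Walk.end_mem_support _))

theorem mem_support_of_ancestor (hA : T.IsAcyclic) (hab : Ancestor T z a b)
    (hbc : Ancestor T z b c) {p : T.Walk c a} (hp : p.IsPath) : b ∈ p.support := by
  classical
  obtain ⟨q, hq, hbq⟩ := hbc
  have haq := (hab.trans hA ⟨q, hq, hbq⟩).mem_support hA hq
  have hpq : p = (q.dropUntil a haq).reverse :=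
    isPath_eq_of_isAcyclic hA hp (hq.dropUntil haq).reverse
  rw [← q.take_spec haq, Walk.mem_support_append_iff] at hbq
  rcases hbq with hb_before | hb_after
  · have hba : a = b := hab.antisymm hA ⟨q.takeUntil a haq, hq.takeUntil haq, hb_before⟩
    exact hba ▸ p.end_mem_support
  · simpa [hpq] using hb_after

theorem mem_support_of_adj (hA : T.IsAcyclic) (hab : T.Adj a b) (hba : Ancestor T z b a)
    (hwa : Ancestor T z w a) (hw : w ≠ a) {p : T.Walk a w} (hp : p.IsPath) :
    b ∈ p.support := by
  rcases hwa.related_of_ancestor hA hba with hwb | hbw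
  · exact hwb.mem_support_of_ancestor hA hba hp
  · have hedge : (Walk.cons hab Walk.nil).IsPath := by simp [hab.ne]
    have := hbw.mem_support_of_ancestor hA hwa hedge
    simp only [Walk.support_cons, Walk.support_nil, List.mem_cons, List.not_mem_nil,
      or_false] at this
    rcases this with rfl | rfl
    · exact absurd rfl hw
    · exact p.end_mem_support

end Ancestor

theorem ancestor_or_ancestor_of_mem_support (hC : T.Connected) (hA : T.IsAcyclic) (z : V)
    {p : T.Walk u v} (hp : p.IsPath) (hx : x ∈ p.support) :
    Ancestor T z x u ∨ Ancestor T z x v := by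
  classical
  obtain ⟨q₁, hq₁⟩ := hC.exists_isPath z u
  obtain ⟨q₂, hq₂⟩ := hC.exists_isPath z v
  have hpq : p = (q₁.reverse.append q₂).bypass :=
    isPath_eq_of_isAcyclic hA hp (Walk.bypass_isPath _)
  have hx' := Walk.support_bypass_subset_support _ (hpq ▸ hx)
  rcases (Walk.mem_support_append_iff _ _).1 hx' with hx₁ | hx₂
  · exact Or.inl ⟨q₁, hq₁, by simpa using hx₁⟩
  · exact Or.inr ⟨q₂, hq₂, hx₂⟩

end RootedTree

namespace Request

variable {T : SimpleGraph V} (r : Request T)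

theorem not_nil : ¬ r.toWalk.Nil :=
  Walk.not_nil_iff_lt_length.2 r.one_le_length

theorem adj_s_sPlus : T.Adj r.s r.sPlus :=
  r.toWalk.adj_snd r.not_nil

theorem adj_tMinus_t : T.Adj r.tMinus r.t :=
  r.toWalk.adj_penultimate r.not_nil

end Request

namespace Converging

variable {T : SimpleGraph V} {z : V} {r : Request T}

theorem ancestor_getVert (hT : T.IsTree) (hr : Converging T z r) {i j : ℕ} (hij : i ≤ j)
    (hj : j ≤ r.toWalk.length) :
    Ancestor T z (r.toWalk.getVert j) (r.toWalk.getVert i) := by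
  induction j, hij using Nat.le_induction with
  | base => exact ancestor_self hT.connected z _
  | succ j hij ih => exact (hr j (by omega)).trans hT.isAcyclic (ih (by omega))

theorem ancestor_sPlus_s (hT : T.IsTree) (hr : Converging T z r) :
    Ancestor T z r.sPlus r.s := by
  simpa [Request.sPlus] using hr.ancestor_getVert hT (Nat.zero_le 1) r.one_le_length

theorem ancestor_tMinus_s (hT : T.IsTree) (hr : Converging T z r) :
    Ancestor T z r.tMinus r.s := by
  simpa [Request.tMinus] using hr.ancestor_getVert hT (Nat.zero_le _) (Nat.sub_le _ 1)

theorem ancestor_t_tMinus (hT : T.IsTree) (hr : Converging T z r) :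
    Ancestor T z r.t r.tMinus := by
  simpa [Request.tMinus] using hr.ancestor_getVert hT (Nat.sub_le r.toWalk.length 1) le_rfl

theorem not_ancestor_tMinus_t (hT : T.IsTree) (hr : Converging T z r) :
    ¬ Ancestor T z r.tMinus r.t :=
  fun h => r.adj_tMinus_t.ne (h.antisymm hT.isAcyclic (hr.ancestor_t_tMinus hT))

end Converging

section Interference

variable {T : SimpleGraph V} {z : V} {r r' : Request T}

theorem InterferesOn.related_tMinus (hT : T.IsTree) (hr : Converging T z r)
    (hr' : Converging T z r') (h : InterferesOn T r r') :
    Related T z r.tMinus r'.tMinus := by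
  obtain ⟨p, hp, -, -, hpen⟩ := h
  have hmem : r'.tMinus ∈ p.support := hpen ▸ p.getVert_mem_support _
  rcases ancestor_or_ancestor_of_mem_support hT.connected hT.isAcyclic z hp hmem with hs | ht
  · exact (hr.ancestor_tMinus_s hT).related_of_ancestor hT.isAcyclic hs
  · exact absurd ht (hr'.not_ancestor_tMinus_t hT)

theorem interferesOn_of_ancestor_tMinus (hT : T.IsTree) (hr : Converging T z r)
    (hr' : Converging T z r') (h : Ancestor T z r'.tMinus r.tMinus) : InterferesOn T r r' := by
  have hA := hT.isAcyclic
  have ht's : Ancestor T z r'.tMinus r.s := h.trans hA (hr.ancestor_tMinus_s hT)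
  have hne : r'.t ≠ r.s := fun e => hr'.not_ancestor_tMinus_t hT (e ▸ ht's)
  obtain ⟨p, hp⟩ := hT.connected.exists_isPath r.s r'.t
  refine ⟨p, hp, Walk.not_nil_iff_lt_length.1 (Walk.not_nil_of_ne hne.symm), ?_, ?_⟩
  · have hsPlus : r.sPlus ∈ p.support :=
      (hr.ancestor_sPlus_s hT).mem_support_of_adj hA r.adj_s_sPlus
        ((hr'.ancestor_t_tMinus hT).trans hA ht's) hne hp
    exact (hA.eq_snd_of_adj_start hp r.adj_s_sPlus hsPlus).symm
  · have htMinus : r'.tMinus ∈ p.support :=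
      (hr'.ancestor_t_tMinus hT).mem_support_of_ancestor hA ht's hp
    exact (hA.eq_penultimate_of_adj_end hp r'.adj_tMinus_t.symm htMinus).symm

end Interference

/-- Lemma 1(i): two converging requests interfere iff their penultimate
vertices are related. -/
theorem converging_interfere_iff {V : Type*} (T : SimpleGraph V) (hT : T.IsTree)
    (z : V) (r r' : Request T)
    (hr : Converging T z r) (hr' : Converging T z r') :
    Interfere T r r' ↔ Related T z r.tMinus r'.tMinus := by
  constructor
  · rintro (h | h)
    · exact h.related_tMinus hT hr hr'
    · exact (h.related_tMinus hT hr' hr).symm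
  · rintro (h | h)
    · exact Or.inr (interferesOn_of_ancestor_tMinus hT hr' hr h)
    · exact Or.inl (interferesOn_of_ancestor_tMinus hT hr hr' h)
end

section
/- Let T be a bidirected tree rooted at a vertex z, let r be a converging request and r' a diverging request in T. Then r and r' interfere if and only if s_r and t_{r'} are not related. -/
open SimpleGraph

variable {V : Type*}

/-!
For `v ≠ z` write `P v` for the neighbour of `v` towards the root. The emission arc of a
converging request `r` is `(s_r, P s_r)` and the reception arc of a diverging request `r'` is
`(P t_{r'}, t_{r'})`. In a tree, the path from `x` to `y` leaves `x` towards the root exactly when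
`y` is not a descendant of `x`: otherwise the paths `z → x` and `x → y` concatenate to the path
`z → y`, and conversely two paths from `x` with different first steps concatenate to a path.
Hence `r` interferes on `r'` iff neither of `s_r`, `t_{r'}` is a descendant of the other. And `r'`
never interferes on `r`: the path from `s_{r'}` to `t_r` would leave `s_{r'}` downwards and enter
`t_r` from below, so each endpoint would be a descendant of the other.
-/
namespace SimpleGraph

variable {V : Type*} {G : SimpleGraph V} {x y w : V}

lemma Walk.snd_ne_snd_of_isPath_reverse_append {p : G.Walk x y} {q : G.Walk x w}
    (hpq : (p.reverse.append q).IsPath) (hq : ¬q.Nil) : p.snd ≠ q.snd :=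
  hpq.ne_of_mem_support_of_append (Walk.adj_snd hq).ne' (by simp) (q.getVert_mem_support 1)

lemma Walk.IsPath.ne_of_one_le_length {p : G.Walk x y} (hp : p.IsPath) (hlen : 1 ≤ p.length) :
    x ≠ y := by
  rintro rfl
  exact Walk.not_nil_iff_lt_length.2 hlen (Walk.isPath_iff_nil.1 hp)

lemma IsAcyclic.isPath_reverse_append (hG : G.IsAcyclic) {p : G.Walk x y} {q : G.Walk x w}
    (hp : p.IsPath) (hq : q.IsPath) (hsnd : p.snd ≠ q.snd) : (p.reverse.append q).IsPath := by
  classical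
  rw [Walk.isPath_def, Walk.support_append, Walk.support_reverse, List.nodup_append]
  refine ⟨List.nodup_reverse.2 hp.support_nodup,
    hq.support_nodup.sublist (List.tail_sublist _), ?_⟩
  rintro v hvp _ hvq rfl
  rw [List.mem_reverse] at hvp
  have hvx : v ≠ x := by
    rintro rfl
    have := hq.support_nodup
    rw [← q.cons_tail_support, List.nodup_cons] at this
    exact this.1 hvq
  have hvq' := List.mem_of_mem_tail hvq
  have htake : p.takeUntil v hvp = q.takeUntil v hvq' :=
    congrArg Subtype.val <|
      (hG.subsingleton_path x v).elim ⟨_, hp.takeUntil hvp⟩ ⟨_, hq.takeUntil hvq'⟩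
  apply hsnd
  rw [← Walk.snd_takeUntil hvx p hvp, htake, Walk.snd_takeUntil hvx]

end SimpleGraph

section RootedTree

variable {T : SimpleGraph V} {z x y c : V}

lemma ancestor_refl (hT : T.Preconnected) (z x : V) : Ancestor T z x x :=
  let ⟨p, hp⟩ := hT.exists_isPath z x
  ⟨p, hp, p.end_mem_support⟩

lemma ancestor_snd {q : T.Walk x z} (hq : q.IsPath) : Ancestor T z q.snd x :=
  ⟨q.reverse, hq.reverse, by simp⟩

lemma ancestor_iff_isPath_append (hT : T.IsTree) {q : T.Walk z x} {p : T.Walk x y}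
    (hq : q.IsPath) (hp : p.IsPath) : Ancestor T z x y ↔ (q.append p).IsPath := by
  classical
  refine ⟨fun ⟨b, hb, hx⟩ => ?_, fun h => ⟨_, h, by simp⟩⟩
  have htake := (hT.existsUnique_path z x).unique (hb.takeUntil hx) hq
  have hdrop := (hT.existsUnique_path x y).unique (hb.dropUntil hx) hp
  rwa [← htake, ← hdrop, Walk.take_spec]

lemma Ancestor.antisymm_s2 (hT : T.IsTree) (hxy : Ancestor T z x y) (hyx : Ancestor T z y x) :
    x = y := by
  classical
  obtain ⟨b, hb, hx⟩ := hxy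
  obtain ⟨c, hc, hy⟩ := hyx
  obtain rfl : c = b.takeUntil x hx := (hT.existsUnique_path z x).unique hc (hb.takeUntil hx)
  have hb' : (b.takeUntil x hx).takeUntil y hy = b :=
    (hT.existsUnique_path z y).unique ((hb.takeUntil hx).takeUntil hy) hb
  have hlen : (b.takeUntil x hx).length = b.length :=
    le_antisymm (b.length_takeUntil_le_length hx)
      (congrArg Walk.length hb' ▸ Walk.length_takeUntil_le_length _ hy)
  rw [← b.getVert_length_takeUntil hx, hlen, Walk.getVert_length]

lemma ancestor_iff_snd_ne (hT : T.IsTree) {q : T.Walk x z} {p : T.Walk x y}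
    (hq : q.IsPath) (hp : p.IsPath) (hp0 : ¬p.Nil) : Ancestor T z x y ↔ q.snd ≠ p.snd := by
  rw [ancestor_iff_isPath_append hT hq.reverse hp]
  exact ⟨fun h => Walk.snd_ne_snd_of_isPath_reverse_append h hp0,
    hT.isAcyclic.isPath_reverse_append hq hp⟩

lemma snd_eq_parent_iff (hT : T.IsTree) (hA : Ancestor T z c x) (hadj : T.Adj x c)
    {p : T.Walk x y} (hp : p.IsPath) (hp0 : ¬p.Nil) : p.snd = c ↔ ¬Ancestor T z x y := by
  obtain ⟨q, hq⟩ := hT.connected.exists_isPath x z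
  have hqc : q.snd = c := by
    by_contra h
    have hxc : Ancestor T z x c :=
      (ancestor_iff_snd_ne hT (p := .cons hadj .nil) hq (by simp [hadj.ne]) Walk.not_nil_cons).2
        (by simpa using h)
    exact hadj.ne (hxc.antisymm_s2 hT hA)
  rw [ancestor_iff_snd_ne hT hq hp hp0, hqc, not_not, eq_comm]

lemma ancestor_of_snd_eq_child (hT : T.IsTree) (hA : Ancestor T z x c) (hxc : x ≠ c)
    {p : T.Walk x y} (hp : p.IsPath) (hsnd : p.snd = c) : Ancestor T z x y := by
  obtain ⟨q, hq⟩ := hT.connected.exists_isPath x z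
  have hp0 : ¬p.Nil := by rintro ⟨⟩; exact hxc hsnd
  rw [ancestor_iff_snd_ne hT hq hp hp0, hsnd]
  intro hqc
  exact hxc (hA.antisymm_s2 hT (hqc ▸ ancestor_snd hq))

end RootedTree

section Requests

variable {T : SimpleGraph V} {z : V} {r : Request T}

lemma Request.not_nil_s2 (r : Request T) : ¬r.toWalk.Nil :=
  Walk.not_nil_iff_lt_length.2 r.one_le_length

lemma Request.adj_sPlus (r : Request T) : T.Adj r.s r.sPlus :=
  Walk.adj_snd r.not_nil_s2

lemma Request.adj_tMinus (r : Request T) : T.Adj r.tMinus r.t :=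
  Walk.adj_penultimate r.not_nil_s2

lemma Converging.ancestor_sPlus (hr : Converging T z r) : Ancestor T z r.sPlus r.s := by
  simpa [Request.sPlus] using hr 0 r.one_le_length

lemma Converging.ancestor_tMinus (hr : Converging T z r) : Ancestor T z r.t r.tMinus := by
  simpa [Request.tMinus, Nat.sub_add_cancel r.one_le_length]
    using hr _ (Nat.sub_lt r.one_le_length one_pos)

lemma Diverging.ancestor_sPlus (hr : Diverging T z r) : Ancestor T z r.s r.sPlus := by
  simpa [Request.sPlus] using hr 0 r.one_le_length

lemma Diverging.ancestor_tMinus (hr : Diverging T z r) : Ancestor T z r.tMinus r.t := by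
  simpa [Request.tMinus, Nat.sub_add_cancel r.one_le_length]
    using hr _ (Nat.sub_lt r.one_le_length one_pos)

end Requests

section Interference

variable {T : SimpleGraph V} {z : V} {r r' : Request T}

lemma interferesOn_iff_not_related (hT : T.IsTree) (hr : Converging T z r)
    (hr' : Diverging T z r') : InterferesOn T r r' ↔ ¬Related T z r.s r'.t := by
  have key {p : T.Walk r.s r'.t} (hp : p.IsPath) (hne : r.s ≠ r'.t) :
      p.snd = r.sPlus ∧ p.penultimate = r'.tMinus ↔ ¬Related T z r.s r'.t := by
    rw [Related, not_or, ← Walk.snd_reverse,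
      snd_eq_parent_iff hT hr.ancestor_sPlus r.adj_sPlus hp (Walk.not_nil_of_ne hne),
      snd_eq_parent_iff hT hr'.ancestor_tMinus r'.adj_tMinus.symm hp.reverse
        (Walk.not_nil_of_ne hne.symm)]
  constructor
  · rintro ⟨p, hp, hlen, hsnd, hpen⟩
    exact (key hp (hp.ne_of_one_le_length hlen)).1 ⟨hsnd, hpen⟩
  · intro hR
    have hne : r.s ≠ r'.t := fun h =>
      hR (.inl (h ▸ ancestor_refl hT.connected.preconnected z _))
    obtain ⟨p, hp⟩ := hT.connected.exists_isPath r.s r'.t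
    exact ⟨p, hp, Walk.not_nil_iff_lt_length.1 (Walk.not_nil_of_ne hne), (key hp hne).2 hR⟩

lemma not_interferesOn_of_diverging_of_converging (hT : T.IsTree) (hr' : Diverging T z r')
    (hr : Converging T z r) : ¬InterferesOn T r' r := by
  rintro ⟨p, hp, hlen, hsnd, hpen⟩
  have hst : Ancestor T z r'.s r.t :=
    ancestor_of_snd_eq_child hT hr'.ancestor_sPlus r'.adj_sPlus.ne hp hsnd
  have hts : Ancestor T z r.t r'.s :=
    ancestor_of_snd_eq_child hT hr.ancestor_tMinus r.adj_tMinus.ne'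
      hp.reverse (by rwa [Walk.snd_reverse])
  exact hp.ne_of_one_le_length hlen (hst.antisymm_s2 hT hts)

end Interference

/-- Lemma 1(iii): a converging request `r` and a diverging request `r'`
interfere iff `s_r` and `t_{r'}` are not related. -/
theorem conv_div_interfere_iff {V : Type*} (T : SimpleGraph V) (hT : T.IsTree)
    (z : V) (r r' : Request T)
    (hr : Converging T z r) (hr' : Diverging T z r') :
    Interfere T r r' ↔ ¬ Related T z r.s r'.t := by
  rw [Interfere, or_iff_left (not_interferesOn_of_diverging_of_converging hT hr' hr)]
  exact interferesOn_iff_not_related hT hr hr'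
end
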